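/- arXiv:1412.0070 — 3 statements merged into one kernel-verified Lean document; each statement's English description precedes it below -/
import Mathlib

section
/- The map θ_{i,j} on k-paths is an involution: for every k-path 𝒫, θ_{i,j}(θ_{i,j}(𝒫)) = 𝒫. Consequently θ_{i,j} is a bijection on the set of k-paths. -/
/-- One step of the `𝒫`-queue driven by the shuffle `M_{a,b}` with `ab = (a, b)`. -/
def queueStep {n : ℕ} (i j : Fin n) (Q : Finset (Fin n)) (ab : Fin n × Fin n) :
    Finset (Fin n) :=
  if ab.1 = j then {i}
  else if ab.1 = i then {j}
  else if ab.2 ∈ Q then insert ab.1 Q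
  else Q.erase ab.1

/-- The `𝒫`-queue at time `t`, for the `k`-path `w` (the shuffle at time `t + 1` is `w t`);
`Q 0 = ∅`. -/
def queueSeq {n : ℕ} (i j : Fin n) {k : ℕ} (w : Fin k → Fin n × Fin n) : ℕ → Finset (Fin n)
  | 0 => ∅
  | t + 1 => if h : t < k then queueStep i j (queueSeq i j w t) (w ⟨t, h⟩) else queueSeq i j w t

/-- The card moved at time `t ∈ {1, …, k}` by the `k`-path `w` (`none` if `t` is out of
range). -/
def cardMoved {n k : ℕ} (w : Fin k → Fin n × Fin n) (t : ℕ) : Option (Fin n) :=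
  if h : 1 ≤ t ∧ t ≤ k then some (w ⟨t - 1, by omega⟩).1 else none

/-- The shuffle at time `t` is an `i`-or-`j` move. -/
def isIJMove {n : ℕ} (i j : Fin n) {k : ℕ} (w : Fin k → Fin n × Fin n) (t : ℕ) : Prop :=
  cardMoved w t = some i ∨ cardMoved w t = some j

/-- `t` is a good time for the `k`-path `w`: it is an `i`-or-`j` move, and the next
`i`-or-`j` move `t'` (within `{1, …, k}`) has a singleton queue at time `t' - 1` and moves a
different card than the one moved at time `t`. -/
def isGoodTime {n : ℕ} (i j : Fin n) {k : ℕ} (w : Fin k → Fin n × Fin n) (t : ℕ) : Prop :=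
  isIJMove i j w t ∧
    ∃ t', t < t' ∧ t' ≤ k ∧ isIJMove i j w t' ∧
      (∀ s, t < s → s < t' → ¬ isIJMove i j w s) ∧
      (queueSeq i j w (t' - 1)).card = 1 ∧
      cardMoved w t' ≠ cardMoved w t

-- The last good time `T` of the `k`-path `w`, equal to `∞` if there are no good times.
open Classical in
noncomputable def lastGoodTime {n : ℕ} (i j : Fin n) {k : ℕ} (w : Fin k → Fin n × Fin n) :
    ℕ∞ :=
  if ∃ t, isGoodTime i j w t then (Nat.findGreatest (isGoodTime i j w) k : ℕ∞) else ⊤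

-- `θ_{i,j}` : interchange the roles of `i` and `j` in every shuffle at a time strictly
-- before the last good time `T` (the shuffle at time `t + 1` is `w t`).
open Classical in
noncomputable def theta {n : ℕ} (i j : Fin n) {k : ℕ} (w : Fin k → Fin n × Fin n) :
    Fin k → Fin n × Fin n :=
  fun s => if (((s : ℕ) + 1 : ℕ) : ℕ∞) < lastGoodTime i j w
    then (Equiv.swap i j (w s).1, Equiv.swap i j (w s).2)
    else w s

-- auxiliary lemmas
section Aux

variable {n k : ℕ}

lemma cardMoved_bounds {w : Fin k → Fin n × Fin n} {t : ℕ} {c : Fin n}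
    (h : cardMoved w t = some c) : 1 ≤ t ∧ t ≤ k := by
  by_contra hc
  simp [cardMoved, hc] at h

lemma isIJMove_bounds {i j : Fin n} {w : Fin k → Fin n × Fin n} {t : ℕ}
    (h : isIJMove i j w t) : 1 ≤ t ∧ t ≤ k := by
  rcases h with h | h <;> exact cardMoved_bounds h

lemma isGoodTime_bounds {i j : Fin n} {w : Fin k → Fin n × Fin n} {t : ℕ}
    (h : isGoodTime i j w t) : 1 ≤ t ∧ t ≤ k :=
  isIJMove_bounds h.1

lemma queueStep_swap {i j : Fin n} (hij : i ≠ j) (Q : Finset (Fin n)) (ab : Fin n × Fin n) :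
    queueStep i j (Q.image (Equiv.swap i j)) (Equiv.swap i j ab.1, Equiv.swap i j ab.2)
      = (queueStep i j Q ab).image (Equiv.swap i j) := by
  obtain ⟨a, b⟩ := ab
  by_cases ha : a = j
  · subst ha
    simp [queueStep, Equiv.swap_apply_right, hij, hij.symm]
  by_cases ha' : a = i
  · subst ha'
    simp [queueStep, Equiv.swap_apply_left, hij, hij.symm]
  · have hfix : Equiv.swap i j a = a := Equiv.swap_apply_of_ne_of_ne ha' ha
    have hmem : Equiv.swap i j b ∈ Q.image (Equiv.swap i j) ↔ b ∈ Q :=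
      Function.Injective.mem_finset_image (Equiv.swap i j).injective
    simp only [queueStep, hfix, ha, ha', if_false, hmem]
    by_cases hb : b ∈ Q
    · rw [if_pos hb, if_pos hb, Finset.image_insert, hfix]
    · rw [if_neg hb, if_neg hb, Finset.image_erase (Equiv.swap i j).injective, hfix]

lemma queueStep_of_ij {i j : Fin n} (Q Q' : Finset (Fin n)) (ab : Fin n × Fin n)
    (h : ab.1 = i ∨ ab.1 = j) : queueStep i j Q ab = queueStep i j Q' ab := by
  rcases h with h | h <;> by_cases hij : (ab.1 = j) <;> simp [queueStep, h, hij]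

lemma queueSeq_swap_prefix {i j : Fin n} (hij : i ≠ j) (w w' : Fin k → Fin n × Fin n)
    (t : ℕ)
    (hw : ∀ s : Fin k, (s : ℕ) < t → w' s = (Equiv.swap i j (w s).1, Equiv.swap i j (w s).2)) :
    queueSeq i j w' t = (queueSeq i j w t).image (Equiv.swap i j) := by
  induction t with
  | zero => simp [queueSeq]
  | succ t ih =>
    have ih' := ih (fun s hs => hw s (Nat.lt_succ_of_lt hs))
    by_cases h : t < k
    · rw [queueSeq, queueSeq, dif_pos h, dif_pos h, ih', hw ⟨t, h⟩ (Nat.lt_succ_self t)]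
      exact queueStep_swap hij _ _
    · rw [queueSeq, queueSeq, dif_neg h, dif_neg h, ih']

lemma queueSeq_agree_high {i j : Fin n} (w w' : Fin k → Fin n × Fin n) (T0 : ℕ)
    (hbase : queueSeq i j w' T0 = queueSeq i j w T0)
    (hw : ∀ s : Fin k, T0 ≤ (s : ℕ) → w' s = w s) :
    ∀ u, T0 ≤ u → queueSeq i j w' u = queueSeq i j w u := by
  intro u
  induction u with
  | zero => intro hu; rwa [Nat.le_zero.mp hu] at hbase
  | succ u ih =>
    intro hu
    rcases Nat.lt_or_ge u T0 with h1 | h1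
    · have : T0 = u + 1 := by omega
      rwa [this] at hbase
    · by_cases h : u < k
      · rw [queueSeq, queueSeq, dif_pos h, dif_pos h, ih h1, hw ⟨u, h⟩ h1]
      · rw [queueSeq, queueSeq, dif_neg h, dif_neg h, ih h1]

lemma cardMoved_swapfun {i j : Fin n} (w : Fin k → Fin n × Fin n) (t : ℕ) :
    cardMoved (fun s => (Equiv.swap i j (w s).1, Equiv.swap i j (w s).2)) t
      = Option.map (Equiv.swap i j) (cardMoved w t) := by
  unfold cardMoved
  split <;> simp

lemma map_swap_eq_ij_iff {i j : Fin n} (c : Option (Fin n)) :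
    (Option.map (Equiv.swap i j) c = some i ∨ Option.map (Equiv.swap i j) c = some j) ↔
    (c = some i ∨ c = some j) := by
  cases c with
  | none => simp
  | some a =>
    simp only [Option.map_some, Option.some.injEq]
    constructor
    · rintro (h | h)
      · right
        have := congrArg (Equiv.swap i j) h
        simpa [Equiv.swap_apply_self, Equiv.swap_apply_left] using this
      · left
        have := congrArg (Equiv.swap i j) h
        simpa [Equiv.swap_apply_self, Equiv.swap_apply_right] using this
    · rintro (h | h) <;> subst h <;>
        simp [Equiv.swap_apply_left, Equiv.swap_apply_right]

lemma isGoodTime_swap {i j : Fin n} (hij : i ≠ j) (w : Fin k → Fin n × Fin n) (t : ℕ) :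
    isGoodTime i j (fun s => (Equiv.swap i j (w s).1, Equiv.swap i j (w s).2)) t
      ↔ isGoodTime i j w t := by
  have hcm : ∀ s, cardMoved (fun s => (Equiv.swap i j (w s).1, Equiv.swap i j (w s).2)) s
      = Option.map (Equiv.swap i j) (cardMoved w s) := cardMoved_swapfun w
  have hij' : ∀ s, isIJMove i j (fun s => (Equiv.swap i j (w s).1, Equiv.swap i j (w s).2)) s
      ↔ isIJMove i j w s := by
    intro s
    unfold isIJMove
    rw [hcm s]
    exact map_swap_eq_ij_iff _
  have hqs : ∀ s, queueSeq i j (fun s => (Equiv.swap i j (w s).1, Equiv.swap i j (w s).2)) s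
      = (queueSeq i j w s).image (Equiv.swap i j) := by
    intro s
    exact queueSeq_swap_prefix hij w _ s (fun _ _ => rfl)
  have hne : ∀ a b : Option (Fin n),
      (Option.map (Equiv.swap i j) a ≠ Option.map (Equiv.swap i j) b) ↔ (a ≠ b) :=
    fun a b => (Option.map_injective (Equiv.swap i j).injective).ne_iff
  unfold isGoodTime
  rw [hij' t]
  refine and_congr Iff.rfl (exists_congr fun t' => ?_)
  rw [hij' t', hqs (t' - 1), Finset.card_image_of_injective _ (Equiv.swap i j).injective,
    hcm t', hcm t, hne]
  refine and_congr Iff.rfl (and_congr Iff.rfl (and_congr Iff.rfl (and_congr ?_ Iff.rfl)))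
  exact forall_congr' fun s => by rw [hij' s]

lemma isGoodTime_congr_high {i j : Fin n} (w w' : Fin k → Fin n × Fin n) (T0 : ℕ)
    (hc : ∀ s, T0 ≤ s → cardMoved w' s = cardMoved w s)
    (hq : ∀ s, T0 ≤ s → queueSeq i j w' s = queueSeq i j w s)
    {t : ℕ} (ht : T0 ≤ t) : isGoodTime i j w' t ↔ isGoodTime i j w t := by
  unfold isGoodTime isIJMove
  rw [hc t ht]
  refine and_congr Iff.rfl (exists_congr fun t' => ?_)
  refine and_congr_right fun h1 => ?_
  rw [hc t' (by omega), hq (t' - 1) (by omega)]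
  refine and_congr Iff.rfl (and_congr Iff.rfl (and_congr ?_ Iff.rfl))
  exact forall_congr' fun s => by
    by_cases hs : t < s
    · rw [hc s (by omega)]
    · simp [hs]

end Aux

/-- `θ_{i,j}` is an involution on `k`-paths, and consequently a bijection. -/
theorem theta_involutive {n k : ℕ} (i j : Fin n) (hij : i ≠ j) :
    (∀ w : Fin k → Fin n × Fin n, theta i j (theta i j w) = w) ∧
    Function.Bijective (fun w : Fin k → Fin n × Fin n => theta i j w) := by
  classical
  have σσ : ∀ a : Fin n, Equiv.swap i j (Equiv.swap i j a) = a :=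
    fun a => Equiv.swap_apply_self i j a
  have hmain : ∀ w : Fin k → Fin n × Fin n, theta i j (theta i j w) = w := by
    intro w
    by_cases hex : ∃ t, isGoodTime i j w t
    · -- there is a good time
      set T := Nat.findGreatest (isGoodTime i j w) k with hTdef
      obtain ⟨t0, ht0⟩ := hex
      have ht0k : t0 ≤ k := (isGoodTime_bounds ht0).2
      have hTgood : isGoodTime i j w T := Nat.findGreatest_spec ht0k ht0
      have hT1 : 1 ≤ T := (isGoodTime_bounds hTgood).1
      have hTk : T ≤ k := Nat.findGreatest_le k
      have hlast : lastGoodTime i j w = (T : ℕ∞) := by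
        rw [lastGoodTime, if_pos ⟨t0, ht0⟩]
      have hθ : ∀ s : Fin k, theta i j w s =
          if (s : ℕ) + 1 < T then (Equiv.swap i j (w s).1, Equiv.swap i j (w s).2)
          else w s := by
        intro s
        rw [theta, hlast]
        norm_cast
      have hθhigh : ∀ s : Fin k, T ≤ (s : ℕ) + 1 → theta i j w s = w s := by
        intro s hs
        rw [hθ s, if_neg (by omega)]
      -- card moved agrees at times ≥ T
      have hc : ∀ s, T ≤ s → cardMoved (theta i j w) s = cardMoved w s := by
        intro s hs
        unfold cardMoved
        split
        · next h =>
          have : s - 1 + 1 = s := by omega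
          rw [hθhigh ⟨s - 1, by omega⟩ (by simpa [this] using hs)]
        · rfl
      -- queues agree at times ≥ T
      have hqT : queueSeq i j (theta i j w) T = queueSeq i j w T := by
        have hTk' : T - 1 < k := by omega
        have hTe : T = (T - 1) + 1 := by omega
        have hmove : (w ⟨T - 1, hTk'⟩).1 = i ∨ (w ⟨T - 1, hTk'⟩).1 = j := by
          rcases hTgood.1 with h | h <;> [left; right] <;>
          · rw [cardMoved, dif_pos ⟨hT1, hTk⟩] at h
            exact Option.some_injective _ h
        rw [hTe, queueSeq, queueSeq, dif_pos hTk', dif_pos hTk',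
          hθhigh ⟨T - 1, hTk'⟩ (by show T ≤ T - 1 + 1; omega)]
        exact queueStep_of_ij _ _ _ hmove
      have hq : ∀ s, T ≤ s → queueSeq i j (theta i j w) s = queueSeq i j w s :=
        queueSeq_agree_high w (theta i j w) T hqT (fun s hs => hθhigh s (by omega))
      -- good times of theta w and w agree at times ≥ T
      have hgiff : ∀ t, T ≤ t → (isGoodTime i j (theta i j w) t ↔ isGoodTime i j w t) :=
        fun t ht => isGoodTime_congr_high w (theta i j w) T hc hq ht
      have hgt : isGoodTime i j (theta i j w) T := (hgiff T le_rfl).mpr hTgood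
      have hnone : ∀ t, T < t → ¬ isGoodTime i j (theta i j w) t := by
        intro t ht hgood
        have htk : t ≤ k := (isGoodTime_bounds hgood).2
        exact Nat.findGreatest_is_greatest ht htk ((hgiff t (le_of_lt ht)).mp hgood)
      have hFG : Nat.findGreatest (isGoodTime i j (theta i j w)) k = T := by
        refine le_antisymm ?_ (Nat.le_findGreatest hTk hgt)
        by_contra hlt
        push_neg at hlt
        exact hnone _ hlt (Nat.findGreatest_spec hTk hgt)
      have hlast' : lastGoodTime i j (theta i j w) = (T : ℕ∞) := by
        rw [lastGoodTime, if_pos ⟨T, hgt⟩, hFG]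
      funext s
      rw [theta, hlast']
      by_cases hs : (s : ℕ) + 1 < T
      · rw [if_pos (by exact_mod_cast hs), hθ s, if_pos hs]
        simp [σσ]
      · rw [if_neg (by exact_mod_cast hs), hθ s, if_neg hs]
    · -- no good time
      have hlast : lastGoodTime i j w = ⊤ := by rw [lastGoodTime, if_neg hex]
      have hθ : theta i j w = fun s => (Equiv.swap i j (w s).1, Equiv.swap i j (w s).2) := by
        funext s
        rw [theta, hlast, if_pos (by exact_mod_cast lt_top_iff_ne_top.mpr (ENat.coe_ne_top _))]
      have hex' : ¬ ∃ t, isGoodTime i j (theta i j w) t := by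
        rintro ⟨t, ht⟩
        rw [hθ] at ht
        exact hex ⟨t, (isGoodTime_swap hij w t).mp ht⟩
      have hlast' : lastGoodTime i j (theta i j w) = ⊤ := by
        rw [lastGoodTime, if_neg hex']
      funext s
      rw [theta, hlast', if_pos (by exact_mod_cast lt_top_iff_ne_top.mpr (ENat.coe_ne_top _)),
        hθ]
      simp [σσ]
  exact ⟨hmain, Function.Involutive.bijective hmain⟩
end

section
/- Let a = 0.6526 and let 𝒫 be a uniformly random k-path, with T its last good time (for fixed distinct i, j). For all sufficiently large n and all integers k > n·log n, ℙ(T ≥ k) ≤ e^{−a·k/n}. -/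
/-!
The event `T ≥ k` says that no good time occurs among the first `k` shuffles. Enrich the
`𝒫`-queue to a Markov chain that also records the card of the latest `i`-or-`j` move and whether
a good time has already been completed. Give a state weight `0` once a good time has been
completed, `1.48463` before the first `i`-or-`j` move, and `ψ(|Q|) ∈ [1, 1.48463]` otherwise.
A one-step computation shows that for `n ≥ 2000` a uniformly random shuffle multiplies the
expected weight by at most `1 - 0.65261 / n`, so `ℙ(T ≥ k) ≤ 1.48463 (1 - 0.65261 / n) ^ k`.
For `k > n log n` with `log n ≥ 50000`, lowering the rate to `0.6526` absorbs the constant.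
-/

section

open Finset

lemma sum_ite_mem_univ {n : ℕ} (Q : Finset (Fin n)) (X Y : ℝ) :
    ∑ b : Fin n, (if b ∈ Q then X else Y) = #Q * X + (n - #Q) * Y := by
  rw [sum_ite, filter_mem_eq_inter, ← sdiff_eq_filter, univ_inter, sum_const, sum_const,
    ← compl_eq_univ_sdiff, card_compl, Fintype.card_fin, nsmul_eq_mul, nsmul_eq_mul,
    Nat.cast_sub (card_le_univ Q |>.trans_eq (Fintype.card_fin n))]

lemma sum_sum_update_eq_card_nsmul {ι α M : Type*} [Fintype ι] [DecidableEq ι] [Fintype α]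
    [AddCommMonoid M] (t : ι) (H : (ι → α) → M) :
    ∑ w, ∑ x, H (Function.update w t x) = Fintype.card α • ∑ w, H w := by
  let f : (ι → α) × α → (ι → α) × α := fun p => (Function.update p.1 t p.2, p.1 t)
  have hf : Function.Involutive f := fun p => by
    simp only [f, Function.update_self, Function.update_idem, Function.update_eq_self]
  calc ∑ w, ∑ x, H (Function.update w t x) = ∑ p, H (f p).1 := by rw [Fintype.sum_prod_type]
    _ = ∑ p : (ι → α) × α, H p.1 := Equiv.sum_comp hf.toPerm fun p => H p.1
    _ = Fintype.card α • ∑ w, H w := by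
      rw [Fintype.sum_prod_type, smul_sum]
      simp

end

namespace LastGoodTime

open Finset

variable {n : ℕ}

lemma queueStep_comm {i j : Fin n} (hij : i ≠ j) (Q : Finset (Fin n)) (ab : Fin n × Fin n) :
    queueStep i j Q ab = queueStep j i Q ab := by
  unfold queueStep
  split_ifs <;> simp_all

lemma queueStep_of_ne {i j a : Fin n} (hai : a ≠ i) (haj : a ≠ j) (Q : Finset (Fin n))
    (b : Fin n) :
    queueStep i j Q (a, b) = if b ∈ Q then insert a Q else Q.erase a := by
  simp [queueStep, hai, haj]

structure Tracker (n : ℕ) where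
  queue : Finset (Fin n)
  lastMoved : Option (Fin n)
  sawGood : Bool

namespace Tracker

def init : Tracker n := ⟨∅, none, false⟩

def CompletesGood (i j : Fin n) (s : Tracker n) (a : Fin n) : Prop :=
  (a = i ∨ a = j) ∧ s.lastMoved ≠ none ∧ s.lastMoved ≠ some a ∧ s.queue.card = 1

instance (i j : Fin n) (s : Tracker n) : DecidablePred (s.CompletesGood i j) := fun _ => by
  unfold CompletesGood; infer_instance

def step (i j : Fin n) (s : Tracker n) (ab : Fin n × Fin n) : Tracker n where
  queue := queueStep i j s.queue ab
  lastMoved := if ab.1 = i ∨ ab.1 = j then some ab.1 else s.lastMoved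
  sawGood := s.sawGood || decide (s.CompletesGood i j ab.1)

lemma step_comm {i j : Fin n} (hij : i ≠ j) (s : Tracker n) (ab : Fin n × Fin n) :
    s.step i j ab = s.step j i ab := by
  simp only [step, CompletesGood, queueStep_comm hij, or_comm]

end Tracker

open Tracker

def track (i j : Fin n) {k : ℕ} (w : Fin k → Fin n × Fin n) : ℕ → Tracker n
  | 0 => init
  | t + 1 => if h : t < k then (track i j w t).step i j (w ⟨t, h⟩) else track i j w t

variable {i j : Fin n} {k : ℕ}

lemma track_succ (w : Fin k → Fin n × Fin n) {t : ℕ} (h : t < k) :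
    track i j w (t + 1) = (track i j w t).step i j (w ⟨t, h⟩) := by
  rw [track, dif_pos h]

lemma track_queue (w : Fin k → Fin n × Fin n) (t : ℕ) :
    (track i j w t).queue = queueSeq i j w t := by
  induction t with
  | zero => rfl
  | succ t ih =>
    rw [track, queueSeq]
    split
    · simp [step, ih]
    · exact ih

lemma track_congr {w w' : Fin k → Fin n × Fin n} {t : ℕ}
    (h : ∀ s : Fin k, (s : ℕ) < t → w s = w' s) : track i j w t = track i j w' t := by
  induction t with
  | zero => rfl
  | succ t ih =>
    rw [track, track, ih fun s hs => h s (by omega)]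
    split
    · rw [h ⟨t, by assumption⟩ (by simp)]
    · rfl

lemma track_update_succ (w : Fin k → Fin n × Fin n) {t : ℕ} (h : t < k) (ab : Fin n × Fin n) :
    track i j (Function.update w ⟨t, h⟩ ab) (t + 1) = (track i j w t).step i j ab := by
  rw [track_succ _ h, Function.update_self,
    track_congr (t := t) fun s hs => Function.update_of_ne (Fin.ne_of_lt hs) _ _]

lemma cardMoved_succ (w : Fin k → Fin n × Fin n) {t : ℕ} (h : t < k) :
    cardMoved w (t + 1) = some (w ⟨t, h⟩).1 := by
  simp [cardMoved, Nat.succ_le_of_lt h]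

lemma isIJMove_succ_iff (w : Fin k → Fin n × Fin n) {t : ℕ} (h : t < k) :
    isIJMove i j w (t + 1) ↔ (w ⟨t, h⟩).1 = i ∨ (w ⟨t, h⟩).1 = j := by
  simp [isIJMove, cardMoved_succ w h]

lemma not_isIJMove_of_lt (w : Fin k → Fin n × Fin n) {t : ℕ} (h : k < t) :
    ¬ isIJMove i j w t := by
  simp [isIJMove, cardMoved, show ¬ t ≤ k by omega]

lemma track_lastMoved_succ (w : Fin k → Fin n × Fin n) {t : ℕ}
    (hm : ¬ isIJMove i j w (t + 1)) :
    (track i j w (t + 1)).lastMoved = (track i j w t).lastMoved := by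
  by_cases htk : t < k
  · rw [isIJMove_succ_iff w htk] at hm
    simp [track_succ w htk, step, hm]
  · rw [track, dif_neg htk]

lemma exists_last_isIJMove (w : Fin k → Fin n × Fin n) {t : ℕ} {c : Fin n}
    (hc : (track i j w t).lastMoved = some c) :
    ∃ s ≤ t, isIJMove i j w s ∧ cardMoved w s = some c ∧
      ∀ u, s < u → u ≤ t → ¬ isIJMove i j w u := by
  induction t with
  | zero => simp [track, init] at hc
  | succ t ih =>
    by_cases hm : isIJMove i j w (t + 1)
    · have htk : t < k := by
        by_contra htk
        exact not_isIJMove_of_lt w (by omega) hm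
      rw [isIJMove_succ_iff w htk] at hm
      simp only [track_succ w htk, step, if_pos hm, Option.some_inj] at hc
      refine ⟨t + 1, le_rfl, (isIJMove_succ_iff w htk).2 hm, ?_, fun u _ _ => by omega⟩
      rw [cardMoved_succ w htk, hc]
    · obtain ⟨s, hst, hs, hsc, hlast⟩ := ih (track_lastMoved_succ w hm ▸ hc)
      refine ⟨s, by omega, hs, hsc, fun u hsu hut => ?_⟩
      rcases Nat.lt_or_eq_of_le hut with hut | rfl
      · exact hlast u hsu (by omega)
      · exact hm

lemma exists_isGoodTime_of_sawGood (w : Fin k → Fin n × Fin n) {t : ℕ}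
    (h : (track i j w t).sawGood = true) : ∃ s, isGoodTime i j w s := by
  induction t with
  | zero => simp [track, init] at h
  | succ t ih =>
    by_cases htk : t < k
    · rw [track_succ w htk] at h
      simp only [step, Bool.or_eq_true, decide_eq_true_eq] at h
      rcases h with h | ⟨hm, hne, hnew, hcard⟩
      · exact ih h
      · obtain ⟨c, hc⟩ := Option.ne_none_iff_exists'.1 hne
        obtain ⟨s, hst, hs, hsc, hlast⟩ := exists_last_isIJMove w hc
        refine ⟨s, hs, t + 1, by omega, htk, (isIJMove_succ_iff w htk).2 hm,
          fun u hsu hut => hlast u hsu (by omega), ?_, ?_⟩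
        · rwa [Nat.add_sub_cancel, ← track_queue]
        · rw [cardMoved_succ w htk, hsc]
          exact fun he => hnew (hc.trans he.symm)
    · rw [track, dif_neg htk] at h
      exact ih h

lemma lt_of_isGoodTime {w : Fin k → Fin n × Fin n} {s : ℕ} (hs : isGoodTime i j w s) :
    s < k := by
  obtain ⟨t', hst', ht'k, -⟩ := hs.2
  omega

lemma lastGoodTime_lt_of_isGoodTime {w : Fin k → Fin n × Fin n} {s : ℕ}
    (hs : isGoodTime i j w s) : lastGoodTime i j w < k := by
  classical
  rw [lastGoodTime, if_pos ⟨s, hs⟩, Nat.cast_lt]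
  exact lt_of_isGoodTime (Nat.findGreatest_spec (lt_of_isGoodTime hs).le hs)

lemma sawGood_eq_false_of_le_lastGoodTime {w : Fin k → Fin n × Fin n}
    (hw : (k : ℕ∞) ≤ lastGoodTime i j w) : (track i j w k).sawGood = false := by
  by_contra h
  obtain ⟨s, hs⟩ := exists_isGoodTime_of_sawGood w (Bool.not_eq_false _ ▸ h)
  exact (lastGoodTime_lt_of_isGoodTime hs).not_ge hw

/-- The values are chosen numerically so that `psi_drift` holds. -/
def psi : ℕ → ℝ
  | 0 => 1
  | 1 => 1
  | 2 => 1.3473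
  | 3 => 1.42855
  | 4 => 1.45763
  | 5 => 1.47039
  | 6 => 1.47682
  | 7 => 1.48047
  | 8 => 1.48283
  | _ + 9 => 1.48463

lemma one_le_psi (q : ℕ) : 1 ≤ psi q := by
  match q with
  | 0 | 1 | 2 | 3 | 4 | 5 | 6 | 7 | 8 | _ + 9 => norm_num [psi]

lemma psi_le (q : ℕ) : psi q ≤ 1.48463 := by
  match q with
  | 0 | 1 | 2 | 3 | 4 | 5 | 6 | 7 | 8 | _ + 9 => norm_num [psi]

lemma psi_of_le {q : ℕ} (h : 9 ≤ q) : psi q = 1.48463 := by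
  obtain ⟨r, rfl⟩ := Nat.exists_eq_add_of_le' h
  rfl

/-- For a state whose latest `i`-or-`j` move moved `i` and whose queue has `q` cards, one of them
`j`, the four terms on the left are the total weights, over all `n` insertion targets, after
moving `i`, moving `j`, moving one of the other `q - 1` queued cards, and moving one of the
`n - q - 1` cards outside the queue. -/
lemma psi_drift {q : ℕ} (hn : 2000 ≤ n) (hq : 1 ≤ q) (hqn : q < n) :
    n + n * (if q = 1 then (0 : ℝ) else 1)
      + ((q : ℝ) - 1) * (q * psi q + (n - q) * psi (q - 1))
      + ((n : ℝ) - q - 1) * (q * psi (q + 1) + (n - q) * psi q)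
      ≤ ((n : ℝ) ^ 2 - 0.65261 * n) * psi q := by
  have hn' : (2000 : ℝ) ≤ n := by exact_mod_cast hn
  have hqn' : (q : ℝ) + 1 ≤ n := by exact_mod_cast hqn
  rcases Nat.lt_or_ge q 9 with hq9 | hq9
  · interval_cases q <;> norm_num [psi] <;> nlinarith
  · have hq9' : (9 : ℝ) ≤ q := by exact_mod_cast hq9
    rw [psi_of_le hq9, psi_of_le (by omega : 9 ≤ q + 1), if_neg (by omega)]
    have hgap : 0 ≤ ((q : ℝ) - 1) * (n - q) * (1.48463 - psi (q - 1)) :=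
      mul_nonneg (mul_nonneg (by linarith) (by linarith)) (by linarith [psi_le (q - 1)])
    nlinarith [one_le_psi (q - 1)]

namespace Tracker

def weight (s : Tracker n) : ℝ :=
  if s.sawGood then 0 else
    match s.lastMoved with
    | none => 1.48463
    | some _ => psi #s.queue

lemma one_le_weight {s : Tracker n} (hs : s.sawGood = false) : 1 ≤ s.weight := by
  unfold weight
  rw [if_neg (by simp [hs])]
  split
  · norm_num
  · exact one_le_psi _

lemma weight_nonneg (s : Tracker n) : 0 ≤ s.weight := by
  cases h : s.sawGood
  · exact zero_le_one.trans (one_le_weight h)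
  · simp [weight, h]

def Armed (i j : Fin n) (s : Tracker n) : Prop :=
  s.lastMoved = some i ∧ j ∈ s.queue ∧ i ∉ s.queue

def Consistent (i j : Fin n) (s : Tracker n) : Prop :=
  (s.lastMoved = none ∧ s.queue = ∅) ∨ s.Armed i j ∨ s.Armed j i

lemma consistent_step (hij : i ≠ j) {s : Tracker n} (hs : s.Consistent i j)
    (ab : Fin n × Fin n) : (s.step i j ab).Consistent i j := by
  obtain ⟨a, b⟩ := ab
  by_cases haj : a = j
  · subst haj
    exact .inr (.inr ⟨by simp [step], by simp [step, queueStep],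
      by simp [step, queueStep, hij.symm]⟩)
  by_cases hai : a = i
  · subst hai
    exact .inr (.inl ⟨by simp [step], by simp [step, queueStep, haj],
      by simp [step, queueStep, haj]⟩)
  have hlast : (s.step i j (a, b)).lastMoved = s.lastMoved := by simp [step, hai, haj]
  have hmem : ∀ x, x ≠ a → (x ∈ (s.step i j (a, b)).queue ↔ x ∈ s.queue) := by
    intro x hxa
    simp only [step, queueStep_of_ne hai haj]
    split_ifs <;> simp [hxa]
  rcases hs with ⟨hl, hq⟩ | ⟨hl, h1, h2⟩ | ⟨hl, h1, h2⟩
  · refine .inl ⟨hlast.trans hl, ?_⟩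
    simp [step, queueStep_of_ne hai haj, hq]
  · exact .inr (.inl ⟨hlast.trans hl, (hmem j (Ne.symm haj)).2 h1,
      mt (hmem i (Ne.symm hai)).1 h2⟩)
  · exact .inr (.inr ⟨hlast.trans hl, (hmem i (Ne.symm hai)).2 h1,
      mt (hmem j (Ne.symm haj)).1 h2⟩)

lemma weight_step_of_ne {a : Fin n} (hai : a ≠ i) (haj : a ≠ j) (Q : Finset (Fin n))
    (last : Option (Fin n)) (b : Fin n) :
    ((⟨Q, last, false⟩ : Tracker n).step i j (a, b)).weight =
      if b ∈ Q then ((⟨insert a Q, last, false⟩ : Tracker n).weight)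
      else (⟨Q.erase a, last, false⟩ : Tracker n).weight := by
  simp only [step, queueStep_of_ne hai haj, CompletesGood, hai, haj, or_self, false_and,
    decide_false, Bool.or_false, if_false]
  split_ifs <;> rfl

lemma sum_weight_step_armed_row (hij : i ≠ j) (Q : Finset (Fin n)) (a : Fin n) :
    ∑ b, ((⟨Q, some i, false⟩ : Tracker n).step i j (a, b)).weight =
      if a = i then (n : ℝ)
      else if a = j then n * (if #Q = 1 then 0 else 1)
      else #Q * psi #(insert a Q) + (n - #Q) * psi #(Q.erase a) := by
  split_ifs with hai haj hQ
  · subst hai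
    simp [step, weight, queueStep, CompletesGood, hij, psi]
  · subst haj
    simp [step, weight, queueStep, CompletesGood, hij, hQ]
  · subst haj
    simp [step, weight, queueStep, CompletesGood, hij, hQ, psi]
  · simp only [weight_step_of_ne hai haj]
    exact sum_ite_mem_univ Q _ _

lemma sum_weight_step_armed (hij : i ≠ j) (hn : 2000 ≤ n) {Q : Finset (Fin n)}
    (hj : j ∈ Q) (hi : i ∉ Q) :
    ∑ ab, ((⟨Q, some i, false⟩ : Tracker n).step i j ab).weight ≤
      ((n : ℝ) ^ 2 - 0.65261 * n) * psi #Q := by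
  have hq : 1 ≤ #Q := card_pos.2 ⟨j, hj⟩
  have hqn : #Q < n := by
    simpa using card_lt_card (ssubset_univ_iff.2 fun h : Q = univ => hi (h ▸ mem_univ i))
  rw [Fintype.sum_prod_type]
  simp only [sum_weight_step_armed_row hij]
  rw [← sum_add_sum_compl Q, ← add_sum_erase Q _ hj, ← add_sum_erase Qᶜ _ (mem_compl.2 hi),
    sum_eq_card_nsmul (b := #Q * psi #Q + (n - #Q) * psi (#Q - 1)) fun a ha => by
      have haQ := mem_of_mem_erase ha
      rw [if_neg (ne_of_mem_of_not_mem haQ hi), if_neg (ne_of_mem_erase ha),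
        insert_eq_of_mem haQ, card_erase_of_mem haQ],
    sum_eq_card_nsmul (b := #Q * psi (#Q + 1) + (n - #Q) * psi #Q) fun a ha => by
      have haQ := mem_compl.1 (mem_of_mem_erase ha)
      rw [if_neg (ne_of_mem_erase ha), if_neg (by rintro rfl; exact haQ hj),
        card_insert_of_notMem haQ, erase_eq_of_notMem haQ],
    card_erase_of_mem hj, card_erase_of_mem (mem_compl.2 hi), card_compl,
    Fintype.card_fin, if_neg hij.symm, if_pos rfl, if_pos rfl, nsmul_eq_mul, nsmul_eq_mul,
    Nat.cast_sub hq, Nat.cast_sub (by omega), Nat.cast_sub hqn.le]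
  push_cast
  linarith [psi_drift hn hq hqn]

lemma sum_weight_step_init (hij : i ≠ j) (hn : 2000 ≤ n) :
    ∑ ab, ((init : Tracker n).step i j ab).weight ≤
      ((n : ℝ) ^ 2 - 0.65261 * n) * (init : Tracker n).weight := by
  have hrow : ∀ a : Fin n, ∑ b, ((init : Tracker n).step i j (a, b)).weight =
      n * (if a ∈ ({i, j} : Finset (Fin n)) then 1 else 1.48463) := by
    intro a
    by_cases haj : a = j
    · subst haj
      simp [step, init, weight, queueStep, CompletesGood, psi]
    by_cases hai : a = i
    · subst hai
      simp [step, init, weight, queueStep, CompletesGood, haj, psi]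
    · rw [init, sum_congr rfl fun b _ => weight_step_of_ne hai haj _ _ b]
      simp [weight, hai, haj]
  have hn' : (2000 : ℝ) ≤ n := by exact_mod_cast hn
  rw [Fintype.sum_prod_type]
  simp only [hrow]
  rw [← mul_sum, sum_ite_mem_univ, card_pair hij]
  norm_num [init, weight]
  nlinarith

lemma sum_weight_step_le (hij : i ≠ j) (hn : 2000 ≤ n) {s : Tracker n}
    (hs : s.Consistent i j) :
    ∑ ab, (s.step i j ab).weight ≤ ((n : ℝ) ^ 2 - 0.65261 * n) * s.weight := by
  obtain ⟨Q, last, _ | _⟩ := s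
  · rcases hs with ⟨hl, hQ⟩ | ⟨hl, hj, hi⟩ | ⟨hl, hi, hj⟩
    · cases hl
      cases hQ
      exact sum_weight_step_init hij hn
    · cases hl
      exact sum_weight_step_armed hij hn hj hi
    · cases hl
      simp only [step_comm hij]
      exact sum_weight_step_armed hij.symm hn hi hj
  · simp [step, weight]

end Tracker

lemma track_consistent (hij : i ≠ j) (w : Fin k → Fin n × Fin n) (t : ℕ) :
    (track i j w t).Consistent i j := by
  induction t with
  | zero => exact .inl ⟨rfl, rfl⟩
  | succ t ih =>
    rw [track]
    split
    · exact consistent_step hij ih _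
    · exact ih

def totalWeight (i j : Fin n) (k t : ℕ) : ℝ :=
  ∑ w : Fin k → Fin n × Fin n, (track i j w t).weight

lemma totalWeight_succ_le (hij : i ≠ j) (hn : 2000 ≤ n) {t : ℕ} (ht : t < k) :
    totalWeight i j k (t + 1) ≤ (1 - 0.65261 / n) * totalWeight i j k t := by
  refine le_of_mul_le_mul_left ?_ (by positivity : (0 : ℝ) < (n : ℝ) ^ 2)
  calc (n : ℝ) ^ 2 * totalWeight i j k (t + 1)
      = ∑ w, ∑ ab, (track i j (Function.update w ⟨t, ht⟩ ab) (t + 1)).weight := by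
        rw [sum_sum_update_eq_card_nsmul ⟨t, ht⟩ fun w => (track i j w (t + 1)).weight]
        simp [totalWeight, sq]
    _ = ∑ w : Fin k → Fin n × Fin n, ∑ ab, ((track i j w t).step i j ab).weight := by
        simp only [track_update_succ]
    _ ≤ ∑ w, ((n : ℝ) ^ 2 - 0.65261 * n) * (track i j w t).weight :=
        sum_le_sum fun w _ => sum_weight_step_le hij hn (track_consistent hij w t)
    _ = (n : ℝ) ^ 2 * ((1 - 0.65261 / n) * totalWeight i j k t) := by
        rw [← mul_sum, totalWeight]
        field_simp

lemma totalWeight_le (hij : i ≠ j) (hn : 2000 ≤ n) {t : ℕ} (ht : t ≤ k) :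
    totalWeight i j k t ≤ (1 - 0.65261 / n) ^ t * (1.48463 * ((n : ℝ) ^ 2) ^ k) := by
  induction t with
  | zero => simp [totalWeight, track, init, weight, sq, mul_comm]
  | succ t ih =>
    have hρ : 0 ≤ 1 - 0.65261 / (n : ℝ) := by
      rw [sub_nonneg, div_le_one (by positivity)]
      exact le_trans (by norm_num) (Nat.cast_le.2 hn)
    calc totalWeight i j k (t + 1) ≤ (1 - 0.65261 / n) * totalWeight i j k t :=
          totalWeight_succ_le hij hn ht
      _ ≤ _ := by
          rw [pow_succ', mul_assoc]
          exact mul_le_mul_of_nonneg_left (ih (by omega)) hρ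

lemma card_lastGoodTime_ge_le (hij : i ≠ j) (hn : 2000 ≤ n) :
    (Nat.card {w : Fin k → Fin n × Fin n // (k : ℕ∞) ≤ lastGoodTime i j w} : ℝ) ≤
      (1 - 0.65261 / n) ^ k * (1.48463 * ((n : ℝ) ^ 2) ^ k) := by
  classical
  rw [Nat.card_eq_fintype_card, Fintype.card_subtype, natCast_card_filter]
  refine le_trans (sum_le_sum fun w _ => ?_) (totalWeight_le hij hn le_rfl)
  split_ifs with hw
  · exact one_le_weight (sawGood_eq_false_of_le_lastGoodTime hw)
  · exact weight_nonneg _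

/-- The factor `1.48463 ≤ e^{0.5}` is absorbed by `0.00001 k / x`, which exceeds `0.5` since
`k / x > log x ≥ 50000`. -/
lemma cap_mul_one_sub_pow_le_exp {x : ℝ} {k : ℕ} (hx : 1 ≤ x) (hlog : 50000 ≤ Real.log x)
    (hk : x * Real.log x < k) :
    (1 - 0.65261 / x) ^ k * 1.48463 ≤ Real.exp (-(0.6526 * k / x)) := by
  have hx0 : 0 < x := by linarith
  have hkx : 50000 ≤ k / x := by
    rw [le_div_iff₀ hx0]
    nlinarith
  have hρ : 0 ≤ 1 - 0.65261 / x := by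
    rw [sub_nonneg, div_le_one hx0]
    linarith
  have hdecay : (1 - 0.65261 / x) ^ k ≤ Real.exp (-(0.65261 * k / x)) := by
    calc (1 - 0.65261 / x) ^ k ≤ Real.exp (-(0.65261 / x)) ^ k :=
          pow_le_pow_left₀ hρ (by linarith [Real.add_one_le_exp (-(0.65261 / x))]) k
      _ = Real.exp (-(0.65261 * k / x)) := by
          rw [← Real.exp_nat_mul]
          ring_nf
  have hcap : (1.48463 : ℝ) ≤ Real.exp (0.00001 * k / x) := by
    calc (1.48463 : ℝ) ≤ 0.5 + 1 := by norm_num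
      _ ≤ Real.exp 0.5 := Real.add_one_le_exp 0.5
      _ ≤ Real.exp (0.00001 * k / x) := by
          rw [Real.exp_le_exp, mul_div_assoc]
          linarith
  calc (1 - 0.65261 / x) ^ k * 1.48463
      ≤ Real.exp (-(0.65261 * k / x)) * Real.exp (0.00001 * k / x) :=
        mul_le_mul hdecay hcap (by norm_num) (Real.exp_pos _).le
    _ = Real.exp (-(0.6526 * k / x)) := by
        rw [← Real.exp_add]
        ring_nf

end LastGoodTime

/-- With `a = 0.6526` : for all sufficiently large `n` and all integers `k > n log n`, the
last good time `T` of a uniformly random `k`-path satisfies `ℙ(T ≥ k) ≤ e^{-a k / n}`. -/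
theorem last_good_time_tail_bound :
    ∃ N : ℕ, ∀ n : ℕ, N ≤ n → ∀ i j : Fin n, i ≠ j →
      ∀ k : ℕ, (n : ℝ) * Real.log n < (k : ℝ) →
        (Nat.card {w : Fin k → Fin n × Fin n // (k : ℕ∞) ≤ lastGoodTime i j w} : ℝ) /
            ((n : ℝ) ^ 2) ^ k ≤ Real.exp (-(0.6526 * (k : ℝ) / (n : ℝ))) := by
  refine ⟨⌈Real.exp 50000⌉₊, fun n hN i j hij k hk => ?_⟩
  have hexp : Real.exp 50000 ≤ n := Nat.ceil_le.1 hN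
  have hn : (2000 : ℝ) ≤ n := by linarith [Real.add_one_le_exp 50000]
  have hlog : 50000 ≤ Real.log n := by
    rwa [Real.le_log_iff_exp_le (by linarith)]
  rw [div_le_iff₀ (by positivity)]
  calc _ ≤ (1 - 0.65261 / n) ^ k * (1.48463 * ((n : ℝ) ^ 2) ^ k) :=
        LastGoodTime.card_lastGoodTime_ge_le hij (by exact_mod_cast hn)
    _ ≤ Real.exp (-(0.6526 * k / n)) * ((n : ℝ) ^ 2) ^ k := by
        rw [← mul_assoc]
        gcongr
        exact LastGoodTime.cap_mul_one_sub_pow_le_exp (by linarith) hlog hk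
end

section
/- Let C₁ be the 8×8 matrix obtained by deleting the row and column indexed by 0 from the matrix C, and let J = I + (1/16)·C₁. Then J is an entrywise nonnegative matrix and its largest (Perron) eigenvalue is strictly less than 1 − 0.6526/16; equivalently, every eigenvalue of C (other than the eigenvalue 0 coming from the absorbing state) is strictly less than −0.6526. -/
/-- The limit matrix `C` of `n (K̃ₙ - I)`, with rows and columns indexed by the nine states
`0, 1, …, 7, ∞`. -/
def Cmat : Matrix (Fin 9) (Fin 9) ℝ :=
  !![0, 0, 0, 0, 0, 0, 0, 0, 0;
     1, -2, 1, 0, 0, 0, 0, 0, 0;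
     0, 3, -5, 2, 0, 0, 0, 0, 0;
     0, 2, 2, -7, 3, 0, 0, 0, 0;
     0, 2, 0, 3, -9, 4, 0, 0, 0;
     0, 2, 0, 0, 4, -11, 5, 0, 0;
     0, 2, 0, 0, 0, 5, -13, 6, 0;
     0, 2, 0, 0, 0, 0, 6, -15, 7;
     0, 2, 0, 0, 0, 0, 0, 0, -2]

/-- `C₁` : the matrix `C` with the row and column indexed by the absorbing state `0`
deleted. -/
def C1 : Matrix (Fin 8) (Fin 8) ℝ := fun s m => Cmat s.succ m.succ

/-- `J = I + (1/16) C₁`. -/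
noncomputable def Jmat : Matrix (Fin 8) (Fin 8) ℝ := 1 + (1 / 16 : ℝ) • C1

lemma C1e_0_0 : C1 0 0 = (-2 : ℝ) := rfl
lemma C1e_0_1 : C1 0 1 = (1 : ℝ) := rfl
lemma C1e_0_2 : C1 0 2 = (0 : ℝ) := rfl
lemma C1e_0_3 : C1 0 3 = (0 : ℝ) := rfl
lemma C1e_0_4 : C1 0 4 = (0 : ℝ) := rfl
lemma C1e_0_5 : C1 0 5 = (0 : ℝ) := rfl
lemma C1e_0_6 : C1 0 6 = (0 : ℝ) := rfl
lemma C1e_0_7 : C1 0 7 = (0 : ℝ) := rfl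
lemma C1e_1_0 : C1 1 0 = (3 : ℝ) := rfl
lemma C1e_1_1 : C1 1 1 = (-5 : ℝ) := rfl
lemma C1e_1_2 : C1 1 2 = (2 : ℝ) := rfl
lemma C1e_1_3 : C1 1 3 = (0 : ℝ) := rfl
lemma C1e_1_4 : C1 1 4 = (0 : ℝ) := rfl
lemma C1e_1_5 : C1 1 5 = (0 : ℝ) := rfl
lemma C1e_1_6 : C1 1 6 = (0 : ℝ) := rfl
lemma C1e_1_7 : C1 1 7 = (0 : ℝ) := rfl
lemma C1e_2_0 : C1 2 0 = (2 : ℝ) := rfl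
lemma C1e_2_1 : C1 2 1 = (2 : ℝ) := rfl
lemma C1e_2_2 : C1 2 2 = (-7 : ℝ) := rfl
lemma C1e_2_3 : C1 2 3 = (3 : ℝ) := rfl
lemma C1e_2_4 : C1 2 4 = (0 : ℝ) := rfl
lemma C1e_2_5 : C1 2 5 = (0 : ℝ) := rfl
lemma C1e_2_6 : C1 2 6 = (0 : ℝ) := rfl
lemma C1e_2_7 : C1 2 7 = (0 : ℝ) := rfl
lemma C1e_3_0 : C1 3 0 = (2 : ℝ) := rfl
lemma C1e_3_1 : C1 3 1 = (0 : ℝ) := rfl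
lemma C1e_3_2 : C1 3 2 = (3 : ℝ) := rfl
lemma C1e_3_3 : C1 3 3 = (-9 : ℝ) := rfl
lemma C1e_3_4 : C1 3 4 = (4 : ℝ) := rfl
lemma C1e_3_5 : C1 3 5 = (0 : ℝ) := rfl
lemma C1e_3_6 : C1 3 6 = (0 : ℝ) := rfl
lemma C1e_3_7 : C1 3 7 = (0 : ℝ) := rfl
lemma C1e_4_0 : C1 4 0 = (2 : ℝ) := rfl
lemma C1e_4_1 : C1 4 1 = (0 : ℝ) := rfl
lemma C1e_4_2 : C1 4 2 = (0 : ℝ) := rfl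
lemma C1e_4_3 : C1 4 3 = (4 : ℝ) := rfl
lemma C1e_4_4 : C1 4 4 = (-11 : ℝ) := rfl
lemma C1e_4_5 : C1 4 5 = (5 : ℝ) := rfl
lemma C1e_4_6 : C1 4 6 = (0 : ℝ) := rfl
lemma C1e_4_7 : C1 4 7 = (0 : ℝ) := rfl
lemma C1e_5_0 : C1 5 0 = (2 : ℝ) := rfl
lemma C1e_5_1 : C1 5 1 = (0 : ℝ) := rfl
lemma C1e_5_2 : C1 5 2 = (0 : ℝ) := rfl
lemma C1e_5_3 : C1 5 3 = (0 : ℝ) := rfl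
lemma C1e_5_4 : C1 5 4 = (5 : ℝ) := rfl
lemma C1e_5_5 : C1 5 5 = (-13 : ℝ) := rfl
lemma C1e_5_6 : C1 5 6 = (6 : ℝ) := rfl
lemma C1e_5_7 : C1 5 7 = (0 : ℝ) := rfl
lemma C1e_6_0 : C1 6 0 = (2 : ℝ) := rfl
lemma C1e_6_1 : C1 6 1 = (0 : ℝ) := rfl
lemma C1e_6_2 : C1 6 2 = (0 : ℝ) := rfl
lemma C1e_6_3 : C1 6 3 = (0 : ℝ) := rfl
lemma C1e_6_4 : C1 6 4 = (0 : ℝ) := rfl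
lemma C1e_6_5 : C1 6 5 = (6 : ℝ) := rfl
lemma C1e_6_6 : C1 6 6 = (-15 : ℝ) := rfl
lemma C1e_6_7 : C1 6 7 = (7 : ℝ) := rfl
lemma C1e_7_0 : C1 7 0 = (2 : ℝ) := rfl
lemma C1e_7_1 : C1 7 1 = (0 : ℝ) := rfl
lemma C1e_7_2 : C1 7 2 = (0 : ℝ) := rfl
lemma C1e_7_3 : C1 7 3 = (0 : ℝ) := rfl
lemma C1e_7_4 : C1 7 4 = (0 : ℝ) := rfl
lemma C1e_7_5 : C1 7 5 = (0 : ℝ) := rfl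
lemma C1e_7_6 : C1 7 6 = (0 : ℝ) := rfl
lemma C1e_7_7 : C1 7 7 = (-2 : ℝ) := rfl

open Polynomial in
lemma poly_root_real (z : ℂ)
    (hz : z^8 + 64*z^7 + 1616*z^6 + 20885*z^5 + 149950*z^4 + 606376*z^3
      + 1327056*z^2 + 1389484*z + 485304 = 0) :
    ∃ x : ℝ, z = x ∧ -22 < x ∧ x < -(6526/10000 : ℝ) := by
  classical
  set g : ℝ → ℝ := fun x => x^8 + 64*x^7 + 1616*x^6 + 20885*x^5 + 149950*x^4
    + 606376*x^3 + 1327056*x^2 + 1389484*x + 485304 with hg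
  have hcont : Continuous g := by unfold g; fun_prop
  have ivt : ∀ a b : ℝ, a ≤ b → g b < 0 → 0 < g a → ∃ x ∈ Set.Ioo a b, g x = 0 := by
    intro a b hab hb ha
    obtain ⟨x, hx, hx0⟩ := intermediate_value_Ioo' hab hcont.continuousOn (Set.mem_Ioo.mpr ⟨hb, ha⟩)
    exact ⟨x, hx, hx0⟩
  have ivt' : ∀ a b : ℝ, a ≤ b → g a < 0 → 0 < g b → ∃ x ∈ Set.Ioo a b, g x = 0 := by
    intro a b hab hb ha
    obtain ⟨x, hx, hx0⟩ := intermediate_value_Ioo hab hcont.continuousOn (Set.mem_Ioo.mpr ⟨hb, ha⟩)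
    exact ⟨x, hx, hx0⟩
  obtain ⟨x1, ⟨hI1a, hI1b⟩, hr1⟩ := ivt (-22) (-15) (by norm_num) (by norm_num [hg]) (by norm_num [hg])
  obtain ⟨x2, ⟨hI2a, hI2b⟩, hr2⟩ := ivt' (-15) (-14) (by norm_num) (by norm_num [hg]) (by norm_num [hg])
  obtain ⟨x3, ⟨hI3a, hI3b⟩, hr3⟩ := ivt (-14) (-10) (by norm_num) (by norm_num [hg]) (by norm_num [hg])
  obtain ⟨x4, ⟨hI4a, hI4b⟩, hr4⟩ := ivt' (-10) (-6) (by norm_num) (by norm_num [hg]) (by norm_num [hg])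
  obtain ⟨x5, ⟨hI5a, hI5b⟩, hr5⟩ := ivt (-6) (-4) (by norm_num) (by norm_num [hg]) (by norm_num [hg])
  obtain ⟨x6, ⟨hI6a, hI6b⟩, hr6⟩ := ivt' (-4) (-3) (by norm_num) (by norm_num [hg]) (by norm_num [hg])
  obtain ⟨x7, ⟨hI7a, hI7b⟩, hr7⟩ := ivt (-3) (-2) (by norm_num) (by norm_num [hg]) (by norm_num [hg])
  obtain ⟨x8, ⟨hI8a, hI8b⟩, hr8⟩ := ivt' (-2) (-(6526/10000)) (by norm_num) (by norm_num [hg])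
    (by norm_num [hg])
  set P : ℂ[X] := X^8 + C 64 * X^7 + C 1616 * X^6 + C 20885 * X^5 + C 149950 * X^4
    + C 606376 * X^3 + C 1327056 * X^2 + C 1389484 * X + C 485304 with hP
  have hdeg : P.natDegree = 8 := by rw [hP]; compute_degree!
  have hPne : P ≠ 0 := by intro h; rw [h] at hdeg; simp at hdeg
  have hroot : ∀ x : ℝ, g x = 0 → (x : ℂ) ∈ P.roots := by
    intro x hx
    rw [Polynomial.mem_roots']
    refine ⟨hPne, ?_⟩
    have h0 : ((g x : ℝ) : ℂ) = 0 := by rw [hx]; simp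
    simp only [hg] at h0
    push_cast at h0
    simp only [hP, IsRoot, eval_add, eval_mul, eval_pow, eval_X, eval_C]
    linear_combination h0
  have hrootz : z ∈ P.roots := by
    rw [Polynomial.mem_roots']
    refine ⟨hPne, ?_⟩
    simp only [hP, IsRoot, eval_add, eval_mul, eval_pow, eval_X, eval_C]
    linear_combination hz
  have hdisj : z = x1 ∨ z = x2 ∨ z = x3 ∨ z = x4 ∨ z = x5 ∨ z = x6 ∨ z = x7 ∨ z = x8 := by
    by_contra hcon
    push_neg at hcon
    obtain ⟨ne1, ne2, ne3, ne4, ne5, ne6, ne7, ne8⟩ := hcon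
    set L : List ℂ := [(x1:ℂ), x2, x3, x4, x5, x6, x7, x8, z] with hL
    have hnd : L.Nodup := by
      simp only [hL, List.nodup_cons, List.mem_cons, List.not_mem_nil, List.mem_singleton,
        or_false, not_or, List.nodup_nil, and_true]
      repeat' apply And.intro
      all_goals
        first
          | (intro hh; rw [Complex.ofReal_inj] at hh; linarith)
          | (intro hh; exact ne1 hh.symm)
          | (intro hh; exact ne2 hh.symm)
          | (intro hh; exact ne3 hh.symm)
          | (intro hh; exact ne4 hh.symm)
          | (intro hh; exact ne5 hh.symm)
          | (intro hh; exact ne6 hh.symm)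
          | (intro hh; exact ne7 hh.symm)
          | (intro hh; exact ne8 hh.symm)
          | trivial
    have hsub : L.toFinset ⊆ P.roots.toFinset := by
      intro w hw
      rw [List.mem_toFinset] at hw
      rw [Multiset.mem_toFinset]
      simp only [hL, List.mem_cons, List.not_mem_nil, or_false] at hw
      rcases hw with rfl|rfl|rfl|rfl|rfl|rfl|rfl|rfl|rfl
      · exact hroot _ hr1
      · exact hroot _ hr2
      · exact hroot _ hr3
      · exact hroot _ hr4
      · exact hroot _ hr5
      · exact hroot _ hr6
      · exact hroot _ hr7
      · exact hroot _ hr8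
      · exact hrootz
    have hcard : (9 : ℕ) ≤ 8 := by
      calc (9:ℕ) = L.toFinset.card := by rw [List.toFinset_card_of_nodup hnd]; rfl
        _ ≤ P.roots.toFinset.card := Finset.card_le_card hsub
        _ ≤ Multiset.card P.roots := Multiset.toFinset_card_le _
        _ ≤ P.natDegree := Polynomial.card_roots' P
        _ = 8 := hdeg
    norm_num at hcard
  rcases hdisj with rfl|rfl|rfl|rfl|rfl|rfl|rfl|rfl
  · exact ⟨x1, rfl, by linarith, by linarith⟩
  · exact ⟨x2, rfl, by linarith, by linarith⟩
  · exact ⟨x3, rfl, by linarith, by linarith⟩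
  · exact ⟨x4, rfl, by linarith, by linarith⟩
  · exact ⟨x5, rfl, by linarith, by linarith⟩
  · exact ⟨x6, rfl, by linarith, by linarith⟩
  · exact ⟨x7, rfl, by linarith, by linarith⟩
  · exact ⟨x8, rfl, by linarith, by linarith⟩

lemma eig_real (μ : ℂ) (v : Fin 8 → ℂ) (hv : v ≠ 0)
    (h : (C1.map (Complex.ofReal ·)).mulVec v = μ • v) :
    ∃ x : ℝ, μ = x ∧ -22 < x ∧ x < -(6526/10000 : ℝ) := by
  have e0 := congrFun h 0
  have e1 := congrFun h 1
  have e2 := congrFun h 2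
  have e3 := congrFun h 3
  have e4 := congrFun h 4
  have e5 := congrFun h 5
  have e6 := congrFun h 6
  have e7 := congrFun h 7
  simp only [Matrix.mulVec, dotProduct, Fin.sum_univ_eight, Matrix.map_apply,
    C1e_0_0, C1e_0_1, C1e_0_2, C1e_0_3, C1e_0_4, C1e_0_5, C1e_0_6, C1e_0_7, C1e_1_0, C1e_1_1, C1e_1_2, C1e_1_3, C1e_1_4, C1e_1_5, C1e_1_6, C1e_1_7, C1e_2_0, C1e_2_1, C1e_2_2, C1e_2_3, C1e_2_4, C1e_2_5, C1e_2_6, C1e_2_7, C1e_3_0, C1e_3_1, C1e_3_2, C1e_3_3, C1e_3_4, C1e_3_5, C1e_3_6, C1e_3_7, C1e_4_0, C1e_4_1, C1e_4_2, C1e_4_3, C1e_4_4, C1e_4_5, C1e_4_6, C1e_4_7, C1e_5_0, C1e_5_1, C1e_5_2, C1e_5_3, C1e_5_4, C1e_5_5, C1e_5_6, C1e_5_7, C1e_6_0, C1e_6_1, C1e_6_2, C1e_6_3, C1e_6_4, C1e_6_5, C1e_6_6, C1e_6_7, C1e_7_0, C1e_7_1, C1e_7_2, C1e_7_3, C1e_7_4,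 C1e_7_5, C1e_7_6, C1e_7_7,
    Pi.smul_apply, smul_eq_mul] at e0 e1 e2 e3 e4 e5 e6 e7
  push_cast at e0 e1 e2 e3 e4 e5 e6 e7
  have h1 : v 1 = (μ + 2) * v 0 := by linear_combination e0
  have h2 : 2 * v 2 = (μ^2 + 7*μ + 7) * v 0 := by linear_combination e1 + (μ + 5) * h1
  have h3 : 6 * v 3 = (μ^3 + 14*μ^2 + 52*μ + 37) * v 0 := by
    linear_combination 2 * e2 + (μ + 7) * h2 - 4 * h1
  have h4 : 24 * v 4 = (μ^4 + 23*μ^3 + 169*μ^2 + 442*μ + 258) * v 0 := by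
    linear_combination 6 * e3 + (μ + 9) * h3 - 9 * h2
  have h5 : 120 * v 5 = (μ^5 + 34*μ^4 + 406*μ^3 + 2077*μ^2 + 4288*μ + 2198) * v 0 := by
    linear_combination 24 * e4 + (μ + 11) * h4 - 16 * h3
  have h6 : 720 * v 6 = (μ^6 + 47*μ^5 + 823*μ^4 + 6780*μ^3 + 27064*μ^2 + 46892*μ + 21884) * v 0 := by
    linear_combination 120 * e5 + (μ + 13) * h5 - 25 * h4
  have h7 : 5040 * v 7 = (μ^7 + 62*μ^6 + 1492*μ^5 + 17901*μ^4 + 114148*μ^3 + 378080*μ^2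
      + 570896*μ + 247692) * v 0 := by
    linear_combination 720 * e6 + (μ + 15) * h6 - 36 * h5
  have key : (μ^8 + 64*μ^7 + 1616*μ^6 + 20885*μ^5 + 149950*μ^4 + 606376*μ^3
      + 1327056*μ^2 + 1389484*μ + 485304) * v 0 = 0 := by
    linear_combination (-5040) * e7 - (μ + 2) * h7
  rcases mul_eq_zero.mp key with hp | hv0
  · exact poly_root_real μ hp
  · exfalso
    apply hv
    have hz1 : v 1 = 0 := by rw [h1, hv0, mul_zero]
    have hz2 : v 2 = 0 := by have t := h2; rw [hv0, mul_zero] at t; simpa using t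
    have hz3 : v 3 = 0 := by have t := h3; rw [hv0, mul_zero] at t; simpa using t
    have hz4 : v 4 = 0 := by have t := h4; rw [hv0, mul_zero] at t; simpa using t
    have hz5 : v 5 = 0 := by have t := h5; rw [hv0, mul_zero] at t; simpa using t
    have hz6 : v 6 = 0 := by have t := h6; rw [hv0, mul_zero] at t; simpa using t
    have hz7 : v 7 = 0 := by have t := h7; rw [hv0, mul_zero] at t; simpa using t
    funext i
    fin_cases i <;>
      first
        | exact hv0
        | exact hz1
        | exact hz2
        | exact hz3
        | exact hz4
        | exact hz5
        | exact hz6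
        | exact hz7

lemma spec_vec {M : Matrix (Fin 8) (Fin 8) ℂ} {μ : ℂ} (h : μ ∈ spectrum ℂ M) :
    ∃ v : Fin 8 → ℂ, v ≠ 0 ∧ M.mulVec v = μ • v := by
  rw [spectrum.mem_iff] at h
  set A := algebraMap ℂ (Matrix (Fin 8) (Fin 8) ℂ) μ - M with hA
  have h2 : ¬ IsUnit A.det := fun hu => h ((Matrix.isUnit_iff_isUnit_det A).mpr hu)
  have hdet : A.det = 0 := by
    by_contra hd
    exact h2 (Ne.isUnit hd)
  obtain ⟨v, hv, hmv⟩ := Matrix.exists_mulVec_eq_zero_iff.mpr hdet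
  refine ⟨v, hv, ?_⟩
  rw [hA, Matrix.sub_mulVec, Algebra.algebraMap_eq_smul_one, Matrix.smul_mulVec,
    Matrix.one_mulVec, sub_eq_zero] at hmv
  exact hmv.symm

lemma Jmap_eq : Jmat.map (Complex.ofReal ·) = 1 + (16:ℂ)⁻¹ • C1.map (Complex.ofReal ·) := by
  ext i j
  simp only [Jmat, Matrix.map_apply, Matrix.add_apply, Matrix.smul_apply, Matrix.one_apply,
    smul_eq_mul]
  split_ifs <;> push_cast <;> ring

/-- `J` is entrywise nonnegative and its largest (Perron) eigenvalue is strictly less than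
`1 - 0.6526/16`; equivalently, every eigenvalue of `C` other than the eigenvalue `0` coming
from the absorbing state (i.e. every eigenvalue of `C₁`) has real part, and in fact value,
strictly less than `-0.6526`. -/
theorem C_second_eigenvalue_bound :
    (∀ s m : Fin 8, 0 ≤ Jmat s m) ∧
    (∀ μ : ℂ, μ ∈ spectrum ℂ (Jmat.map (Complex.ofReal ·)) → ‖μ‖ < 1 - 0.6526 / 16) ∧
    (∀ μ : ℂ, μ ∈ spectrum ℂ (C1.map (Complex.ofReal ·)) → μ.im = 0 ∧ μ.re < -0.6526) := by
  refine ⟨?_, ?_, ?_⟩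
  · intro s m
    fin_cases s <;> fin_cases m <;>
      simp [Jmat, Matrix.add_apply, Matrix.smul_apply, smul_eq_mul, Matrix.one_apply,
        C1e_0_0, C1e_0_1, C1e_0_2, C1e_0_3, C1e_0_4, C1e_0_5, C1e_0_6, C1e_0_7, C1e_1_0, C1e_1_1, C1e_1_2, C1e_1_3, C1e_1_4, C1e_1_5, C1e_1_6, C1e_1_7, C1e_2_0, C1e_2_1, C1e_2_2, C1e_2_3, C1e_2_4, C1e_2_5, C1e_2_6, C1e_2_7, C1e_3_0, C1e_3_1, C1e_3_2, C1e_3_3, C1e_3_4, C1e_3_5, C1e_3_6, C1e_3_7, C1e_4_0, C1e_4_1, C1e_4_2, C1e_4_3, C1e_4_4, C1e_4_5, C1e_4_6, C1e_4_7, C1e_5_0, C1e_5_1, C1e_5_2, C1e_5_3, C1e_5_4, C1e_5_5, C1e_5_6, C1e_5_7, C1e_6_0, C1e_6_1, C1e_6_2, C1e_6_3, C1e_6_4, C1e_6_5, C1e_6_6, C1e_6_7, C1e_7_0, C1e_7_1, C1e_7_2, C1e_7_3, C1e_7_4, C1e_7_5, C1e_7_6, C1e_7_7] <;>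
      norm_num
  · intro μ hμ
    obtain ⟨v, hv, hmv⟩ := spec_vec hμ
    rw [Jmap_eq, Matrix.add_mulVec, Matrix.one_mulVec, Matrix.smul_mulVec] at hmv
    have hC : (C1.map (Complex.ofReal ·)).mulVec v = (16*(μ-1)) • v := by
      funext i
      have t := congrFun hmv i
      simp only [Pi.add_apply, Pi.smul_apply, smul_eq_mul] at t ⊢
      linear_combination (16:ℂ) * t
    obtain ⟨x, hx, hxa, hxb⟩ := eig_real _ v hv hC
    have hμx : μ = ((1 + x/16 : ℝ) : ℂ) := by
      push_cast
      have : (16:ℂ) ≠ 0 := by norm_num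
      field_simp at hx ⊢
      linear_combination hx
    rw [hμx, Complex.norm_real, Real.norm_eq_abs]
    rw [abs_lt]
    constructor <;> nlinarith
  · intro μ hμ
    obtain ⟨v, hv, hmv⟩ := spec_vec hμ
    obtain ⟨x, hx, hxa, hxb⟩ := eig_real _ v hv hmv
    rw [hx]
    norm_num
    linarith
end
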